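/- The low-temperature ratchet current saturates as N → ∞: with J_R^{(N)} := (b_{N−1} − 2·b_{N−2} − 2) / (2·((3+√5)/2)^N + 2·((3−√5)/2)^N − 4), one has lim_{N→∞} J_R^{(N)} = 1/2 − 1/√5. -/
import Mathlib


/-- The determinant sequence `b_n = det B_n`: `b_1 = 3`, `b_2 = 8` and
`b_n = 3·b_{n−1} − b_{n−2}` (with the consistent convention `b_0 = 1`). -/
def bseq : ℕ → ℤ
  | 0 => 1
  | 1 => 3
  | n + 2 => 3 * bseq (n + 1) - bseq n

/-- The low-temperature ratchet current for `N` states per ring: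
`J_R^{(N)} = (b_{N−1} − 2·b_{N−2} − 2)/𝒵_N` with normalization
`𝒵_N = 2·((3+√5)/2)^N + 2·((3−√5)/2)^N − 4`. -/
noncomputable def JR (N : ℕ) : ℝ :=
  ((bseq (N - 1) - 2 * bseq (N - 2) - 2 : ℤ) : ℝ) /
    (2 * ((3 + Real.sqrt 5) / 2) ^ N + 2 * ((3 - Real.sqrt 5) / 2) ^ N - 4)

/-- Closed (Binet-type) form for `bseq`: `√5 · b_n = φ^{n+1} − ψ^{n+1}` with
`φ = (3+√5)/2`, `ψ = (3−√5)/2`. -/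
lemma bseq_closed (n : ℕ) :
    Real.sqrt 5 * (bseq n : ℝ)
      = ((3 + Real.sqrt 5)/2) ^ (n+1) - ((3 - Real.sqrt 5)/2) ^ (n+1) := by
  have hs5 : Real.sqrt 5 ^ 2 = 5 := Real.sq_sqrt (by norm_num)
  induction n using Nat.twoStepInduction with
  | zero => norm_num [bseq]; ring
  | one => norm_num [bseq]; ring
  | more n ih1 ih2 =>
    have hb : (bseq (n+2) : ℝ) = 3 * (bseq (n+1) : ℝ) - (bseq n : ℝ) := by
      push_cast [bseq]; ring
    rw [hb]
    linear_combination 3*ih2 - ih1 +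
      ((((3 - Real.sqrt 5)/2)^(n+1) - ((3 + Real.sqrt 5)/2)^(n+1))/4) * hs5

/-- `G` expresses the ratchet current as a rational function of `t = ψ^N`. -/
noncomputable def G (t : ℝ) : ℝ :=
  (1 - t^2 - 2*((3 - Real.sqrt 5)/2) + 2*((3 + Real.sqrt 5)/2)*t^2 - 2*Real.sqrt 5*t) /
    (Real.sqrt 5 * (2 + 2*t^2 - 4*t))

/-- For `N = m + 2 ≥ 2` the ratchet current equals `G (ψ^N)`. -/
lemma JR_succ (m : ℕ) : JR (m+2) = G (((3 - Real.sqrt 5)/2) ^ (m+2)) := by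
  have hs5 : Real.sqrt 5 ^ 2 = 5 := Real.sq_sqrt (by norm_num)
  have hs0 : 0 < Real.sqrt 5 := Real.sqrt_pos.mpr (by norm_num)
  set s := Real.sqrt 5 with hsdef
  set p : ℝ := (3 + s)/2 with hp
  set q : ℝ := (3 - s)/2 with hq
  have h1 : p * q = 1 := by rw [hp, hq]; linear_combination (-1/4) * hs5
  have hq0 : 0 < q := by rw [hq]; nlinarith
  have hb1 : s * (bseq (m+1) : ℝ) = p^(m+2) - q^(m+2) := bseq_closed (m+1)
  have hb0 : s * (bseq m : ℝ) = p^(m+1) - q^(m+1) := bseq_closed m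
  have hXY : p^(m+2) * q^(m+2) = 1 := by rw [← mul_pow, h1, one_pow]
  have hne : s * q^(m+2) ≠ 0 := by positivity
  have ha : (1 - (q^(m+2))^2 - 2*q + 2*p*(q^(m+2))^2 - 2*s*(q^(m+2)))
      = (s * q^(m+2)) * ((bseq (m+1) : ℝ) - 2*(bseq m : ℝ) - 2) := by
    linear_combination (-(q^(m+2))) * hb1 + (2*q^(m+2)) * hb0 +
      (-2*q^(m+2)*(p^(m+1) - q^(m+1))) * h1 + (2*q - 1) * hXY
  have hd : (s * (2 + 2*(q^(m+2))^2 - 4*(q^(m+2))))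
      = (s * q^(m+2)) * (2 * p^(m+2) + 2 * q^(m+2) - 4) := by
    linear_combination (-2*s) * hXY
  rw [JR, G]
  rw [← hsdef, ← hp, ← hq]
  have hcast : ((bseq (m+2-1) - 2 * bseq (m+2-2) - 2 : ℤ) : ℝ)
      = (bseq (m+1) : ℝ) - 2*(bseq m : ℝ) - 2 := by
    norm_num
  rw [hcast, ha, hd, mul_div_mul_left _ _ hne]

/-- The low-temperature ratchet current saturates as `N → ∞`:
`J_R^{(N)} → 1/2 − 1/√5`. -/
theorem ratchet_current_saturates :
    Filter.Tendsto JR Filter.atTop (nhds (1 / 2 - 1 / Real.sqrt 5)) := by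
  have hs5 : Real.sqrt 5 ^ 2 = 5 := Real.sq_sqrt (by norm_num)
  have hs0 : 0 < Real.sqrt 5 := Real.sqrt_pos.mpr (by norm_num)
  have hs2 : 2 < Real.sqrt 5 := by nlinarith
  have hs3 : Real.sqrt 5 < 3 := by nlinarith
  have hq0 : (0:ℝ) ≤ (3 - Real.sqrt 5)/2 := by linarith
  have hq1 : (3 - Real.sqrt 5)/2 < 1 := by linarith
  have hqlim : Filter.Tendsto (fun N : ℕ => ((3 - Real.sqrt 5)/2) ^ N)
      Filter.atTop (nhds 0) := tendsto_pow_atTop_nhds_zero_of_lt_one hq0 hq1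
  have hGc : ContinuousAt G 0 := by
    apply ContinuousAt.div
    · fun_prop
    · fun_prop
    · norm_num
  have hG0 : G 0 = 1 / 2 - 1 / Real.sqrt 5 := by
    rw [G]
    norm_num
    field_simp
    ring
  have hlim : Filter.Tendsto (fun N : ℕ => G (((3 - Real.sqrt 5)/2) ^ N))
      Filter.atTop (nhds (1 / 2 - 1 / Real.sqrt 5)) := by
    have := hGc.tendsto.comp hqlim
    rwa [hG0] at this
  refine hlim.congr' ?_
  filter_upwards [Filter.eventually_ge_atTop 2] with N hN
  obtain ⟨m, rfl⟩ := Nat.exists_eq_add_of_le hN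
  rw [Nat.add_comm 2 m]
  exact (JR_succ m).symm
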